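/- Let u : ℝⁿ → ℝ be a C³ function. Then the cofactor matrix of the Hessian D²u has divergence-free rows: for each i, Σ_{j=1}^{n} D_j (cof(D²u))_{ij} = 0. -/

import Mathlib

/-- The cofactor matrix: `(i,j)` entry is `(−1)^{i+j}` times the `(i,j)` minor. -/
noncomputable def cof {n : ℕ} (P : Matrix (Fin (n + 1)) (Fin (n + 1)) ℝ) :
    Matrix (Fin (n + 1)) (Fin (n + 1)) ℝ :=
  Matrix.of fun i j =>
    (-1 : ℝ) ^ (i.val + j.val) * (P.submatrix i.succAbove j.succAbove).det

/-- Partial derivative in the `j`-th coordinate direction. -/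
noncomputable def pderiv {n : ℕ} (j : Fin (n + 1))
    (f : (Fin (n + 1) → ℝ) → ℝ) (x : Fin (n + 1) → ℝ) : ℝ :=
  fderiv ℝ f x (Pi.single j 1)

/-!
The Hessian of `u` is the Jacobian of `v = ∇u`, so this is the Piola identity for the `C²` map
`v`. Expanding each cofactor as a signed sum over the permutations `σ` with `σ i = j`, the
divergence of row `i` becomes `∑_σ sign σ · D_{σ i} ∏_{m ≠ i} D_{σ m} v_m`. After the product
rule, the term in which `D_{σ i}` falls on the factor `m = k` is cancelled by the corresponding
term for `σ * swap i k`, which has the opposite sign and differs only by the order of the mixed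
partials `D_{σ i} D_{σ k} v_k`.
-/

open Finset Equiv

lemma Equiv.Perm.sum_sign_mul_eq_zero_of_mul_swap {α R : Type*} [Fintype α] [DecidableEq α]
    [Ring R] {i k : α} (hik : i ≠ k) (g : Perm α → R) (hg : ∀ σ, g (σ * swap i k) = g σ) :
    ∑ σ : Perm α, (Perm.sign σ : R) * g σ = 0 :=
  sum_involution (fun σ _ => σ * swap i k)
    (fun σ _ => by simp [hg, Perm.sign_mul, Perm.sign_swap hik])
    (fun σ _ _ => (not_congr mul_swap_eq_iff).mpr hik) (fun _ _ => mem_univ _)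
    fun σ _ => mul_swap_involutive i k σ

section Cofactor

variable {n : ℕ} (P : Matrix (Fin (n + 1)) (Fin (n + 1)) ℝ) (i j : Fin (n + 1))

lemma cof_eq_det_updateRow : cof P i j = (P.updateRow i (Pi.single j 1)).det := by
  rw [Matrix.det_succ_row _ i, sum_eq_single j (fun b _ hb => by simp [hb]) (by simp)]
  have hminor : (P.updateRow i (Pi.single j 1)).submatrix i.succAbove j.succAbove
      = P.submatrix i.succAbove j.succAbove := by
    ext a b
    simp
  simp [cof, hminor]

lemma cof_eq_sum_perm :
    cof P i j = ∑ σ : Perm (Fin (n + 1)) with σ i = j,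
      (Perm.sign σ : ℝ) * ∏ m ∈ univ.erase i, P m (σ m) := by
  rw [cof_eq_det_updateRow, ← Matrix.det_transpose, Matrix.det_apply', sum_filter]
  refine sum_congr rfl fun σ _ => ?_
  rw [← mul_prod_erase univ _ (mem_univ i)]
  have hrow : ∀ m ∈ univ.erase i, P.updateRow i (Pi.single j 1) m (σ m) = P m (σ m) :=
    fun m hm => by rw [Matrix.updateRow_ne (ne_of_mem_erase hm)]
  split_ifs with h <;> simp [prod_congr rfl hrow, h]

end Cofactor

section PartialDerivative

variable {n : ℕ} {x : Fin (n + 1) → ℝ}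

lemma contDiff_pderiv {m : WithTop ℕ∞} {f : (Fin (n + 1) → ℝ) → ℝ} (hf : ContDiff ℝ (m + 1) f)
    (j : Fin (n + 1)) : ContDiff ℝ m (pderiv j f) :=
  (hf.fderiv_right le_rfl).clm_apply contDiff_const

lemma pderiv_sum {ι : Type*} {s : Finset ι} {g : ι → (Fin (n + 1) → ℝ) → ℝ}
    (hg : ∀ a ∈ s, DifferentiableAt ℝ (g a) x) (j : Fin (n + 1)) :
    pderiv j (fun y => ∑ a ∈ s, g a y) x = ∑ a ∈ s, pderiv j (g a) x := by
  simp [pderiv, fderiv_fun_sum hg]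

lemma pderiv_const_mul {f : (Fin (n + 1) → ℝ) → ℝ} (hf : DifferentiableAt ℝ f x) (c : ℝ)
    (j : Fin (n + 1)) : pderiv j (fun y => c * f y) x = c * pderiv j f x := by
  simp [pderiv, fderiv_const_mul hf]

lemma pderiv_prod {ι : Type*} [DecidableEq ι] {s : Finset ι} {g : ι → (Fin (n + 1) → ℝ) → ℝ}
    (hg : ∀ a ∈ s, DifferentiableAt ℝ (g a) x) (j : Fin (n + 1)) :
    pderiv j (fun y => ∏ a ∈ s, g a y) x
      = ∑ a ∈ s, (∏ b ∈ s.erase a, g b x) * pderiv j (g a) x := by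
  simp [pderiv, fderiv_finsetProd hg]

lemma pderiv_pderiv_comm {f : (Fin (n + 1) → ℝ) → ℝ} (hf : ContDiff ℝ 2 f) (a b : Fin (n + 1)) :
    pderiv a (pderiv b f) x = pderiv b (pderiv a f) x := by
  have hdiff : DifferentiableAt ℝ (fderiv ℝ f) x :=
    (hf.fderiv_right (by norm_num)).differentiable one_ne_zero x
  have hsecond : ∀ c d : Fin (n + 1), pderiv c (pderiv d f) x
      = fderiv ℝ (fderiv ℝ f) x (Pi.single c 1) (Pi.single d 1) := fun c d => by
    change fderiv ℝ (fun y => fderiv ℝ f y (Pi.single d 1)) x (Pi.single c 1) = _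
    simp [fderiv_clm_apply hdiff (differentiableAt_const _)]
  rw [hsecond, hsecond, (hf.contDiffAt.isSymmSndFDerivAt (by simp)).eq]

end PartialDerivative

theorem sum_pderiv_cof_jacobian_eq_zero {n : ℕ} (v : Fin (n + 1) → (Fin (n + 1) → ℝ) → ℝ)
    (hv : ∀ a, ContDiff ℝ 2 (v a)) (x : Fin (n + 1) → ℝ) (i : Fin (n + 1)) :
    ∑ j, pderiv j (fun y => cof (Matrix.of fun a b => pderiv b (v a) y) i j) x = 0 := by
  have hJ : ∀ a b, Differentiable ℝ (pderiv b (v a)) := fun a b =>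
    (contDiff_pderiv (m := 1) (hv a) b).differentiable one_ne_zero
  set s := univ.erase i
  set minor : Perm (Fin (n + 1)) → (Fin (n + 1) → ℝ) → ℝ :=
    fun σ y => ∏ m ∈ s, pderiv (σ m) (v m) y
  have hminor : ∀ σ, DifferentiableAt ℝ (minor σ) x := fun σ =>
    (HasFDerivAt.finsetProd fun m _ => (hJ m (σ m) x).hasFDerivAt).differentiableAt
  calc ∑ j, pderiv j (fun y => cof (Matrix.of fun a b => pderiv b (v a) y) i j) x
      = ∑ j, ∑ σ : Perm (Fin (n + 1)) with σ i = j,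
          (Perm.sign σ : ℝ) * pderiv j (minor σ) x := by
        simp_rw [cof_eq_sum_perm, Matrix.of_apply]
        refine sum_congr rfl fun j _ => ?_
        rw [pderiv_sum fun σ _ => (hminor σ).const_mul _]
        exact sum_congr rfl fun σ _ => pderiv_const_mul (hminor σ) _ j
    _ = ∑ σ : Perm (Fin (n + 1)), (Perm.sign σ : ℝ) * pderiv (σ i) (minor σ) x := by
        rw [← sum_fiberwise univ fun σ : Perm (Fin (n + 1)) => σ i]
        exact sum_congr rfl fun j _ => sum_congr rfl fun σ hσ => by rw [(mem_filter.1 hσ).2]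
    _ = ∑ k ∈ s, ∑ σ : Perm (Fin (n + 1)), (Perm.sign σ : ℝ) *
          ((∏ m ∈ s.erase k, pderiv (σ m) (v m) x) * pderiv (σ i) (pderiv (σ k) (v k)) x) := by
        rw [sum_comm]
        refine sum_congr rfl fun σ _ => ?_
        rw [pderiv_prod fun m _ => (hJ m (σ m)) x, mul_sum]
    _ = 0 := by
        refine sum_eq_zero fun k hk =>
          Perm.sum_sign_mul_eq_zero_of_mul_swap (ne_of_mem_erase hk).symm _ fun σ => ?_
        have hfix : ∀ m ∈ s.erase k, pderiv ((σ * swap i k) m) (v m) x = pderiv (σ m) (v m) x :=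
          fun m hm => by
            rw [Perm.mul_apply, swap_apply_of_ne_of_ne (ne_of_mem_erase (mem_of_mem_erase hm))
              (ne_of_mem_erase hm)]
        rw [prod_congr rfl hfix, Perm.mul_apply, Perm.mul_apply, swap_apply_left, swap_apply_right,
          pderiv_pderiv_comm (hv k)]

/-- For `u ∈ C³(ℝⁿ)`, the cofactor matrix of the Hessian `D²u` has
divergence-free rows: `Σ_j D_j (cof (D²u))_{ij} = 0` for each `i`. -/
theorem cofactor_hessian_divergence_free {n : ℕ}
    (u : (Fin (n + 1) → ℝ) → ℝ) (hu : ContDiff ℝ 3 u) :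
    ∀ (x : Fin (n + 1) → ℝ) (i : Fin (n + 1)),
      ∑ j : Fin (n + 1),
        pderiv j (fun y => cof (Matrix.of fun a b => pderiv b (pderiv a u) y) i j) x
        = 0 :=
  fun x i => sum_pderiv_cof_jacobian_eq_zero (fun a => pderiv a u)
    (fun a => contDiff_pderiv (m := 2) hu a) x i
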